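/- If two deterministic finite automata recognise the same language, then the equality of their matricial evaluations u·M*·v = s·N*·t is derivable in Kleene algebra, where (u,M,v) and (s,N,t) are the matrix representations of the two DFAs over regular expressions. -/

import Mathlib

structure IsKleeneAlgebra {X : Type*} (add mul : X → X → X) (star : X → X)
    (one zero : X) : Prop where
  add_assoc : ∀ x y z, add (add x y) z = add x (add y z)
  add_comm : ∀ x y, add x y = add y x
  add_idem : ∀ x, add x x = x
  add_zero : ∀ x, add x zero = x
  mul_assoc : ∀ x y z, mul (mul x y) z = mul x (mul y z)
  one_mul : ∀ x, mul one x = x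
  mul_one : ∀ x, mul x one = x
  zero_mul : ∀ x, mul zero x = zero
  mul_zero : ∀ x, mul x zero = zero
  left_distrib : ∀ x y z, mul x (add y z) = add (mul x y) (mul x z)
  right_distrib : ∀ x y z, mul (add x y) z = add (mul x z) (mul y z)
  star_unfold : ∀ x, add (add one (mul x (star x))) (star x) = star x
  star_ind_left : ∀ x y, add (mul y x) x = x → add (mul (star y) x) x = x
  star_ind_right : ∀ x y, add (mul x y) x = x → add (mul x (star y)) x = x

inductive Regex (A : Type) : Type
  | zero : Regex A
  | one : Regex A
  | letter : A → Regex A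
  | plus : Regex A → Regex A → Regex A
  | mul : Regex A → Regex A → Regex A
  | star : Regex A → Regex A

def Regex.eval {A : Type} {X : Type*} [KleeneAlgebra X] (σ : A → X) :
    Regex A → X
  | .zero => 0
  | .one => 1
  | .letter p => σ p
  | .plus x y => x.eval σ + y.eval σ
  | .mul x y => x.eval σ * y.eval σ
  | .star x => KStar.kstar (x.eval σ)

/-- KA-provable equality: `x = y` holds in every Kleene algebra under
every interpretation. -/
def KAEquiv {A : Type} (x y : Regex A) : Prop :=
  ∀ (X : Type) [KleeneAlgebra X] (σ : A → X), x.eval σ = y.eval σ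

instance regexSetoid (A : Type) : Setoid (Regex A) :=
  ⟨KAEquiv, fun _ _ _ _ => rfl,
   fun h X _ σ => (h X σ).symm,
   fun h1 h2 X _ σ => (h1 X σ).trans (h2 X σ)⟩

/-- Regular expressions modulo KA-provable equality. -/
def RegexQ (A : Type) := Quotient (regexSetoid A)

def RegexQ.zero {A : Type} : RegexQ A := ⟦Regex.zero⟧
def RegexQ.one {A : Type} : RegexQ A := ⟦Regex.one⟧

def RegexQ.add {A : Type} : RegexQ A → RegexQ A → RegexQ A :=
  Quotient.map₂ Regex.plus (fun _ _ h1 _ _ h2 X _ σ => by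
    simp [Regex.eval, h1 X σ, h2 X σ])

def RegexQ.mul {A : Type} : RegexQ A → RegexQ A → RegexQ A :=
  Quotient.map₂ Regex.mul (fun _ _ h1 _ _ h2 X _ σ => by
    simp [Regex.eval, h1 X σ, h2 X σ])

def RegexQ.sum {A : Type} (l : List (RegexQ A)) : RegexQ A :=
  l.foldr RegexQ.add RegexQ.zero

/-- Matrix addition over `RegexQ`. -/
def mAdd {A : Type} {ι κ : Type} (M N : Matrix ι κ (RegexQ A)) :
    Matrix ι κ (RegexQ A) :=
  Matrix.of fun i j => (M i j).add (N i j)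

/-- Matrix multiplication over `RegexQ`. -/
noncomputable def mMul {A : Type} {ι κ l : Type} [Fintype κ] (M : Matrix ι κ (RegexQ A))
    (N : Matrix κ l (RegexQ A)) : Matrix ι l (RegexQ A) :=
  Matrix.of fun i j => RegexQ.sum ((Finset.univ.toList (α := κ)).map fun k => (M i k).mul (N k j))

def mId {A : Type} (ι : Type) [DecidableEq ι] : Matrix ι ι (RegexQ A) :=
  Matrix.of fun i j => if i = j then RegexQ.one else RegexQ.zero

def mZero {A : Type} (ι κ : Type) : Matrix ι κ (RegexQ A) :=
  Matrix.of fun _ _ => RegexQ.zero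

/-- The 0-1 initial row vector of a DFA. -/
def dfaU {A : Type} {n : ℕ} (start : Fin n) : Matrix (Fin 1) (Fin n) (RegexQ A) :=
  Matrix.of fun _ j => if j = start then RegexQ.one else RegexQ.zero

/-- The transition matrix of a DFA: entry (i,j) is the sum of the letters
leading from state i to state j, so that each row contains exactly one
occurrence of each letter. -/
noncomputable def dfaM {A : Type} [Fintype A] {n : ℕ} (step : Fin n → A → Fin n) :
    Matrix (Fin n) (Fin n) (RegexQ A) :=
  Matrix.of fun i j =>
    RegexQ.sum (((Finset.univ.filter fun p => step i p = j).toList).map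
      fun p => ⟦Regex.letter p⟧)

/-- The 0-1 accepting column vector of a DFA. -/
def dfaV {A : Type} {n : ℕ} (accept : Fin n → Bool) :
    Matrix (Fin n) (Fin 1) (RegexQ A) :=
  Matrix.of fun i _ => if accept i then RegexQ.one else RegexQ.zero

/-- The word accepted relation of a DFA. -/
def dfaAccepts {A : Type} {n : ℕ} (step : Fin n → A → Fin n) (start : Fin n)
    (accept : Fin n → Bool) (w : List A) : Prop :=
  accept (w.foldl step start) = true

/-! The 0-1 matrix `F` relating a state `p` of the first automaton to a state `q` of the second
whenever a common word leads to `p` and to `q` is a simulation: `u₂ ≤ u₁ F`, `F M₂ ≤ M₁ F`, and,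
if the second language is contained in the first, `F v₂ ≤ v₁`. Star induction turns
`F M₂ ≤ M₁ F` into `F M₂* ≤ M₁* F`, so `u₂ M₂* v₂ ≤ u₁ F M₂* v₂ ≤ u₁ M₁* F v₂ ≤ u₁ M₁* v₁`;
exchanging the automata gives the reverse inequality. -/

namespace RegexQ

variable {A : Type}

instance : Zero (RegexQ A) := ⟨RegexQ.zero⟩
instance : One (RegexQ A) := ⟨RegexQ.one⟩
instance : Add (RegexQ A) := ⟨RegexQ.add⟩
instance : Mul (RegexQ A) := ⟨RegexQ.mul⟩

instance : KStar (RegexQ A) :=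
  ⟨Quotient.map Regex.star fun _ _ h X _ σ => congrArg KStar.kstar (h X σ)⟩

instance : Semiring (RegexQ A) where
  add_assoc := by rintro ⟨x⟩ ⟨y⟩ ⟨z⟩; exact Quotient.sound fun _ _ _ => add_assoc _ _ _
  add_comm := by rintro ⟨x⟩ ⟨y⟩; exact Quotient.sound fun _ _ _ => add_comm _ _
  zero_add := by rintro ⟨x⟩; exact Quotient.sound fun _ _ _ => zero_add _
  add_zero := by rintro ⟨x⟩; exact Quotient.sound fun _ _ _ => add_zero _
  nsmul := nsmulRec
  mul_assoc := by rintro ⟨x⟩ ⟨y⟩ ⟨z⟩; exact Quotient.sound fun _ _ _ => mul_assoc _ _ _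
  one_mul := by rintro ⟨x⟩; exact Quotient.sound fun _ _ _ => one_mul _
  mul_one := by rintro ⟨x⟩; exact Quotient.sound fun _ _ _ => mul_one _
  zero_mul := by rintro ⟨x⟩; exact Quotient.sound fun _ _ _ => zero_mul _
  mul_zero := by rintro ⟨x⟩; exact Quotient.sound fun _ _ _ => mul_zero _
  left_distrib := by rintro ⟨x⟩ ⟨y⟩ ⟨z⟩; exact Quotient.sound fun _ _ _ => mul_add _ _ _
  right_distrib := by rintro ⟨x⟩ ⟨y⟩ ⟨z⟩; exact Quotient.sound fun _ _ _ => add_mul _ _ _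

instance : IdemSemiring (RegexQ A) :=
  .ofSemiring <| by rintro ⟨x⟩; exact Quotient.sound fun _ _ _ => add_idem _

def mk (x : Regex A) : RegexQ A := ⟦x⟧

theorem mk_le_mk {x y : Regex A} :
    mk x ≤ mk y ↔ ∀ (X : Type) [KleeneAlgebra X] (σ : A → X), x.eval σ ≤ y.eval σ :=
  Quotient.eq.trans <| forall_congr' fun _ => forall_congr' fun _ => forall_congr' fun _ =>
    add_eq_right_iff_le

instance : KleeneAlgebra (RegexQ A) where
  one_le_kstar := by rintro ⟨x⟩; exact mk_le_mk.2 fun _ _ _ => one_le_kstar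
  mul_kstar_le_kstar := by rintro ⟨x⟩; exact mk_le_mk.2 fun _ _ _ => mul_kstar_le_kstar
  kstar_mul_le_kstar := by rintro ⟨x⟩; exact mk_le_mk.2 fun _ _ _ => kstar_mul_le_kstar
  mul_kstar_le_self := by
    rintro ⟨x⟩ ⟨y⟩ h; exact mk_le_mk.2 fun X _ σ => mul_kstar_le_self (mk_le_mk.1 h X σ)
  kstar_mul_le_self := by
    rintro ⟨x⟩ ⟨y⟩ h; exact mk_le_mk.2 fun X _ σ => kstar_mul_le_self (mk_le_mk.1 h X σ)

end RegexQ

abbrev Matrix.entrywisePartialOrder {ι κ α : Type*} [PartialOrder α] :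
    PartialOrder (Matrix ι κ α) :=
  Pi.partialOrder

attribute [local instance] Matrix.entrywisePartialOrder

namespace Matrix

variable {ι κ μ α : Type*} [IdemSemiring α]

theorem le_iff_add_eq_right {X Y : Matrix ι κ α} : X ≤ Y ↔ X + Y = Y := by
  simp only [← Matrix.ext_iff, Matrix.add_apply, add_eq_right_iff_le]
  rfl

theorem add_le_iff {X Y Z : Matrix ι κ α} : X + Y ≤ Z ↔ X ≤ Z ∧ Y ≤ Z :=
  ⟨fun h => ⟨fun i j => (_root_.add_le_iff.1 (h i j)).1,
      fun i j => (_root_.add_le_iff.1 (h i j)).2⟩,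
    fun h i j => add_le (h.1 i j) (h.2 i j)⟩

theorem mul_le_mul_left_of_le [Fintype κ] (Z : Matrix ι κ α) {X Y : Matrix κ μ α} (h : X ≤ Y) :
    Z * X ≤ Z * Y := by
  rw [le_iff_add_eq_right] at h ⊢
  rw [← Matrix.mul_add, h]

theorem mul_le_mul_right_of_le [Fintype κ] {X Y : Matrix ι κ α} (h : X ≤ Y) (Z : Matrix κ μ α) :
    X * Z ≤ Y * Z := by
  rw [le_iff_add_eq_right] at h ⊢
  rw [← Matrix.add_mul, h]

theorem apply_mul_apply_le_mul_apply [Fintype κ] (X : Matrix ι κ α) (Y : Matrix κ μ α)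
    (i : ι) (k : κ) (j : μ) : X i k * Y k j ≤ (X * Y) i j :=
  Finset.single_le_sum (f := fun k => X i k * Y k j) (fun _ _ => zero_le) (Finset.mem_univ k)

end Matrix

theorem Finset.sum_le_of_forall_le {ι α : Type*} [IdemSemiring α] {s : Finset ι} {f : ι → α}
    {c : α} (h : ∀ i ∈ s, f i ≤ c) : ∑ i ∈ s, f i ≤ c :=
  Finset.sum_induction f (· ≤ c) (fun _ _ => add_le) zero_le h

section

variable {A : Type}

open Matrix

theorem RegexQ.sum_eq_list_sum (l : List (RegexQ A)) : RegexQ.sum l = l.sum := by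
  induction l with
  | nil => rfl
  | cons a l ih => exact congrArg (a + ·) ih

theorem mAdd_eq_add {ι κ : Type} (M N : Matrix ι κ (RegexQ A)) : mAdd M N = M + N := rfl

theorem mMul_eq_mul {ι κ μ : Type} [Fintype κ] (M : Matrix ι κ (RegexQ A))
    (N : Matrix κ μ (RegexQ A)) : mMul M N = M * N := by
  ext i j
  exact (RegexQ.sum_eq_list_sum _).trans (Finset.sum_map_toList _ _)

theorem mId_eq_one (ι : Type) [DecidableEq ι] : mId (A := A) ι = 1 := by
  ext i j
  exact Matrix.one_apply.symm

namespace IsKleeneAlgebra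

variable {ι κ : Type} [Fintype ι] [DecidableEq ι]
  {S : Matrix ι ι (RegexQ A) → Matrix ι ι (RegexQ A)}

theorem one_add_mul_star_le (hS : IsKleeneAlgebra mAdd mMul S (mId ι) (mZero ι ι))
    (M : Matrix ι ι (RegexQ A)) : 1 + M * S M ≤ S M :=
  le_iff_add_eq_right.2 <| by
    simpa only [mAdd_eq_add, mMul_eq_mul, mId_eq_one] using hS.star_unfold M

theorem one_le_star (hS : IsKleeneAlgebra mAdd mMul S (mId ι) (mZero ι ι))
    (M : Matrix ι ι (RegexQ A)) : 1 ≤ S M :=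
  (add_le_iff.1 (hS.one_add_mul_star_le M)).1

theorem mul_star_le (hS : IsKleeneAlgebra mAdd mMul S (mId ι) (mZero ι ι))
    (M : Matrix ι ι (RegexQ A)) : M * S M ≤ S M :=
  (add_le_iff.1 (hS.one_add_mul_star_le M)).2

theorem star_mul_le_of_mul_le (hS : IsKleeneAlgebra mAdd mMul S (mId ι) (mZero ι ι))
    {M X : Matrix ι ι (RegexQ A)} (h : M * X ≤ X) : S M * X ≤ X := by
  have := hS.star_ind_left X M
  simp only [mAdd_eq_add, mMul_eq_mul, ← le_iff_add_eq_right] at this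
  exact this h

theorem le_star (hS : IsKleeneAlgebra mAdd mMul S (mId ι) (mZero ι ι))
    (M : Matrix ι ι (RegexQ A)) : M ≤ S M :=
  calc M = M * 1 := (Matrix.mul_one M).symm
    _ ≤ M * S M := mul_le_mul_left_of_le M (hS.one_le_star M)
    _ ≤ S M := hS.mul_star_le M

theorem star_mul_le (hS : IsKleeneAlgebra mAdd mMul S (mId ι) (mZero ι ι))
    (M : Matrix ι ι (RegexQ A)) : S M * M ≤ S M :=
  calc S M * M ≤ S M * S M := mul_le_mul_left_of_le _ (hS.le_star M)
    _ ≤ S M := hS.star_mul_le_of_mul_le (hS.mul_star_le M)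

/-- The star is axiomatised on square matrices only: apply its induction rule to the square
matrix all of whose rows are the `k`-th row of `X`. -/
theorem mul_star_le_of_mul_le (hS : IsKleeneAlgebra mAdd mMul S (mId ι) (mZero ι ι))
    {M : Matrix ι ι (RegexQ A)} {X : Matrix κ ι (RegexQ A)} (h : X * M ≤ X) :
    X * S M ≤ X := by
  intro k j
  have := hS.star_ind_right (replicateRow ι (X k)) M
  simp only [mAdd_eq_add, mMul_eq_mul, ← le_iff_add_eq_right, ← replicateRow_vecMul] at this
  exact this (fun _ => h k) j j

end IsKleeneAlgebra

section Simulation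

variable {ι κ μ ν : Type} [Fintype ι] [DecidableEq ι] [Fintype κ] [DecidableEq κ]
  {S₁ : Matrix ι ι (RegexQ A) → Matrix ι ι (RegexQ A)}
  {S₂ : Matrix κ κ (RegexQ A) → Matrix κ κ (RegexQ A)}

theorem mul_star_le_star_mul_of_mul_le
    (hS₁ : IsKleeneAlgebra mAdd mMul S₁ (mId ι) (mZero ι ι))
    (hS₂ : IsKleeneAlgebra mAdd mMul S₂ (mId κ) (mZero κ κ))
    {M₁ : Matrix ι ι (RegexQ A)} {M₂ : Matrix κ κ (RegexQ A)} {F : Matrix ι κ (RegexQ A)}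
    (h : F * M₂ ≤ M₁ * F) : F * S₂ M₂ ≤ S₁ M₁ * F := by
  have h_closed : S₁ M₁ * F * M₂ ≤ S₁ M₁ * F :=
    calc S₁ M₁ * F * M₂ = S₁ M₁ * (F * M₂) := Matrix.mul_assoc _ _ _
      _ ≤ S₁ M₁ * (M₁ * F) := mul_le_mul_left_of_le _ h
      _ = S₁ M₁ * M₁ * F := (Matrix.mul_assoc _ _ _).symm
      _ ≤ S₁ M₁ * F := mul_le_mul_right_of_le (hS₁.star_mul_le M₁) F
  calc F * S₂ M₂ = 1 * F * S₂ M₂ := by rw [Matrix.one_mul]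
    _ ≤ S₁ M₁ * F * S₂ M₂ :=
      mul_le_mul_right_of_le (mul_le_mul_right_of_le (hS₁.one_le_star M₁) F) _
    _ ≤ S₁ M₁ * F := hS₂.mul_star_le_of_mul_le h_closed

theorem mul_star_mul_le_of_simulation
    (hS₁ : IsKleeneAlgebra mAdd mMul S₁ (mId ι) (mZero ι ι))
    (hS₂ : IsKleeneAlgebra mAdd mMul S₂ (mId κ) (mZero κ κ))
    {u₁ : Matrix μ ι (RegexQ A)} {M₁ : Matrix ι ι (RegexQ A)} {v₁ : Matrix ι ν (RegexQ A)}
    {u₂ : Matrix μ κ (RegexQ A)} {M₂ : Matrix κ κ (RegexQ A)} {v₂ : Matrix κ ν (RegexQ A)}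
    (F : Matrix ι κ (RegexQ A))
    (hu : u₂ ≤ u₁ * F) (hM : F * M₂ ≤ M₁ * F) (hv : F * v₂ ≤ v₁) :
    u₂ * S₂ M₂ * v₂ ≤ u₁ * S₁ M₁ * v₁ :=
  calc u₂ * S₂ M₂ * v₂ ≤ u₁ * F * S₂ M₂ * v₂ :=
        mul_le_mul_right_of_le (mul_le_mul_right_of_le hu _) _
    _ = u₁ * (F * S₂ M₂) * v₂ := by rw [Matrix.mul_assoc u₁]
    _ ≤ u₁ * (S₁ M₁ * F) * v₂ :=
        mul_le_mul_right_of_le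
          (mul_le_mul_left_of_le _ (mul_star_le_star_mul_of_mul_le hS₁ hS₂ hM)) _
    _ = u₁ * S₁ M₁ * (F * v₂) := by simp only [Matrix.mul_assoc]
    _ ≤ u₁ * S₁ M₁ * v₁ := mul_le_mul_left_of_le _ hv

end Simulation

section DFA

theorem dfaU_apply {n : ℕ} (start : Fin n) (x : Fin 1) (j : Fin n) :
    dfaU (A := A) start x j = if j = start then 1 else 0 := rfl

theorem dfaU_mul_apply {n : ℕ} {κ : Type} (start : Fin n) (N : Matrix (Fin n) κ (RegexQ A))
    (x : Fin 1) (j : κ) : (dfaU (A := A) start * N) x j = N start j := by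
  simp [Matrix.mul_apply, dfaU_apply]

theorem dfaV_apply {n : ℕ} (accept : Fin n → Bool) (i : Fin n) (x : Fin 1) :
    dfaV (A := A) accept i x = if accept i then 1 else 0 := rfl

theorem dfaM_apply [Fintype A] {n : ℕ} (step : Fin n → A → Fin n) (i j : Fin n) :
    dfaM step i j = ∑ a ∈ Finset.univ.filter (step i · = j), RegexQ.mk (.letter a) :=
  (RegexQ.sum_eq_list_sum _).trans (Finset.sum_map_toList _ _)

theorem letter_le_dfaM [Fintype A] {n : ℕ} (step : Fin n → A → Fin n) (i : Fin n) (a : A) :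
    RegexQ.mk (.letter a) ≤ dfaM step i (step i a) := by
  rw [dfaM_apply]
  exact Finset.single_le_sum (f := fun b => RegexQ.mk (.letter b)) (fun _ _ => zero_le)
    (Finset.mem_filter.2 ⟨Finset.mem_univ a, rfl⟩)

variable {n m : ℕ} (step₁ : Fin n → A → Fin n) (start₁ : Fin n)
  (step₂ : Fin m → A → Fin m) (start₂ : Fin m)

open Classical in
noncomputable def reachablePairs : Matrix (Fin n) (Fin m) (RegexQ A) :=
  Matrix.of fun i j =>
    if ∃ w : List A, w.foldl step₁ start₁ = i ∧ w.foldl step₂ start₂ = j then 1 else 0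

theorem reachablePairs_foldl (w : List A) :
    reachablePairs step₁ start₁ step₂ start₂ (w.foldl step₁ start₁) (w.foldl step₂ start₂) = 1 :=
  if_pos ⟨w, rfl, rfl⟩

variable {step₁ start₁ step₂ start₂} in
theorem reachablePairs_mul_le {i : Fin n} {j : Fin m} {x y : RegexQ A}
    (h : ∀ w : List A, w.foldl step₁ start₁ = i → w.foldl step₂ start₂ = j → x ≤ y) :
    reachablePairs step₁ start₁ step₂ start₂ i j * x ≤ y := by
  rw [reachablePairs, Matrix.of_apply]
  split_ifs with hw
  · obtain ⟨w, hi, hj⟩ := hw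
    rw [one_mul]
    exact h w hi hj
  · rw [zero_mul]
    exact zero_le

theorem dfaU_le_dfaU_mul_reachablePairs :
    dfaU (A := A) start₂ ≤ dfaU (A := A) start₁ * reachablePairs step₁ start₁ step₂ start₂ := by
  intro x j
  rw [dfaU_mul_apply, dfaU_apply]
  split_ifs with hj
  · rw [hj]
    exact (reachablePairs_foldl step₁ start₁ step₂ start₂ []).ge
  · exact zero_le

variable {step₁ start₁ step₂ start₂} in
theorem reachablePairs_mul_dfaV_le {accept₁ : Fin n → Bool} {accept₂ : Fin m → Bool}
    (h : ∀ w, dfaAccepts step₂ start₂ accept₂ w → dfaAccepts step₁ start₁ accept₁ w) :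
    reachablePairs step₁ start₁ step₂ start₂ * dfaV (A := A) accept₂ ≤ dfaV accept₁ := by
  intro i x
  rw [Matrix.mul_apply]
  refine Finset.sum_le_of_forall_le fun j _ => reachablePairs_mul_le fun w hi hj => ?_
  rw [dfaV_apply, dfaV_apply]
  by_cases h₂ : accept₂ j
  · have h₁ : accept₁ i := by
      simpa only [dfaAccepts, hi] using h w (by simpa only [dfaAccepts, hj])
    simp [h₁, h₂]
  · simp [h₂]

variable [Fintype A]

theorem reachablePairs_mul_dfaM_le :
    reachablePairs step₁ start₁ step₂ start₂ * dfaM step₂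
      ≤ dfaM step₁ * reachablePairs step₁ start₁ step₂ start₂ := by
  set R := reachablePairs step₁ start₁ step₂ start₂
  intro i j
  rw [Matrix.mul_apply]
  refine Finset.sum_le_of_forall_le fun k _ => reachablePairs_mul_le fun w hi hk => ?_
  rw [dfaM_apply]
  refine Finset.sum_le_of_forall_le fun a ha => ?_
  rw [← (Finset.mem_filter.1 ha).2]
  have h_reach : R (step₁ i a) (step₂ k a) = 1 := by
    simpa [← hi, ← hk] using reachablePairs_foldl step₁ start₁ step₂ start₂ (w ++ [a])
  calc RegexQ.mk (.letter a) = RegexQ.mk (.letter a) * R (step₁ i a) (step₂ k a) := by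
        rw [h_reach, mul_one]
    _ ≤ dfaM step₁ i (step₁ i a) * R (step₁ i a) (step₂ k a) :=
        _root_.mul_le_mul_left (letter_le_dfaM step₁ i a) _
    _ ≤ (dfaM step₁ * R) i (step₂ k a) := apply_mul_apply_le_mul_apply _ _ _ _ _

end DFA

end

theorem dfa_eval_le_of_lang_subset {A : Type} [Fintype A] {n m : ℕ}
    {step₁ : Fin n → A → Fin n} {start₁ : Fin n} {accept₁ : Fin n → Bool}
    {step₂ : Fin m → A → Fin m} {start₂ : Fin m} {accept₂ : Fin m → Bool}
    (hlang : ∀ w, dfaAccepts step₂ start₂ accept₂ w → dfaAccepts step₁ start₁ accept₁ w)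
    {S₁ : Matrix (Fin n) (Fin n) (RegexQ A) → Matrix (Fin n) (Fin n) (RegexQ A)}
    {S₂ : Matrix (Fin m) (Fin m) (RegexQ A) → Matrix (Fin m) (Fin m) (RegexQ A)}
    (hS₁ : IsKleeneAlgebra mAdd mMul S₁ (mId (Fin n)) (mZero (Fin n) (Fin n)))
    (hS₂ : IsKleeneAlgebra mAdd mMul S₂ (mId (Fin m)) (mZero (Fin m) (Fin m))) :
    dfaU (A := A) start₂ * S₂ (dfaM step₂) * dfaV (A := A) accept₂
      ≤ dfaU (A := A) start₁ * S₁ (dfaM step₁) * dfaV (A := A) accept₁ :=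
  mul_star_mul_le_of_simulation hS₁ hS₂ (reachablePairs step₁ start₁ step₂ start₂)
    (dfaU_le_dfaU_mul_reachablePairs step₁ start₁ step₂ start₂)
    (reachablePairs_mul_dfaM_le step₁ start₁ step₂ start₂)
    (reachablePairs_mul_dfaV_le hlang)

theorem dfa_eval_eq_of_lang_eq {A : Type} [Fintype A]
    {n m : ℕ}
    (step₁ : Fin n → A → Fin n) (start₁ : Fin n) (accept₁ : Fin n → Bool)
    (step₂ : Fin m → A → Fin m) (start₂ : Fin m) (accept₂ : Fin m → Bool)
    (hlang : ∀ w : List A,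
      dfaAccepts step₁ start₁ accept₁ w ↔ dfaAccepts step₂ start₂ accept₂ w)
    (S₁ : Matrix (Fin n) (Fin n) (RegexQ A) → Matrix (Fin n) (Fin n) (RegexQ A))
    (S₂ : Matrix (Fin m) (Fin m) (RegexQ A) → Matrix (Fin m) (Fin m) (RegexQ A))
    (hS₁ : IsKleeneAlgebra mAdd mMul S₁ (mId (Fin n)) (mZero (Fin n) (Fin n)))
    (hS₂ : IsKleeneAlgebra mAdd mMul S₂ (mId (Fin m)) (mZero (Fin m) (Fin m))) :
    mMul (mMul (dfaU start₁) (S₁ (dfaM step₁))) (dfaV accept₁) 0 0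
      = mMul (mMul (dfaU start₂) (S₂ (dfaM step₂))) (dfaV accept₂) 0 0 := by
  simp only [mMul_eq_mul]
  have h_eval := le_antisymm
    (dfa_eval_le_of_lang_subset (fun w => (hlang w).1) hS₂ hS₁)
    (dfa_eval_le_of_lang_subset (fun w => (hlang w).2) hS₁ hS₂)
  exact congrFun₂ h_eval 0 0
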